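/- For every integer n ≥ 1 and every integer k ≥ 0: I^O_n T_k = 0 if n does not divide k; I^O_n T_k = 1/2 if k is an even multiple of n (i.e. k ≡ 0 mod 2n); and I^O_n T_k = −1/2 if k is an odd multiple of n (i.e. k ≡ n mod 2n). -/

import Mathlib

open Real

/-- The endpoint weights `ε_j`: `1/2` for `j ∈ {0, n}` and `1` otherwise. -/
noncomputable def chebLobattoWeight (n j : ℕ) : ℝ :=
  if j = 0 ∨ j = n then 1 / 2 else 1

/-- The odd-index part `I^O_n` of the Gauss–Chebyshev–Lobatto quadrature:
`I^O_n f = (1/n) ∑_{0 ≤ j ≤ n, j odd} ε_j f(cos(jπ/n))`. -/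
noncomputable def Iodd (n : ℕ) (f : ℝ → ℝ) : ℝ :=
  (1 / (n : ℝ)) *
    ∑ j ∈ (Finset.range (n + 1)).filter (fun j => Odd j),
      chebLobattoWeight n j * f (Real.cos ((j : ℝ) * π / n))

/-!
Since `T_k(cos θ) = cos(kθ)`, `I^O_n T_k` is a weighted sum of `cos(jkπ/n)` over odd `j ≤ n`.
The summand is invariant under `j ↦ 2n - j`, so the endpoint weights `ε_j` fold this into half
the sum of `cos((2m+1)θ)`, `m < n`, with `θ = kπ/n`. Multiplying by `2 sin θ` telescopes that sum
to `sin(2nθ) = sin(2kπ) = 0`, so it vanishes unless `sin θ = 0`, i.e. `n ∣ k`; if `k = nd`, every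
term equals `(-1)^d`.
-/

open Finset Polynomial.Chebyshev

theorem two_mul_sin_mul_sum_range_cos_odd_mul (θ : ℝ) (n : ℕ) :
    2 * sin θ * ∑ m ∈ range n, cos ((2 * m + 1) * θ) = sin (2 * n * θ) := by
  have telescope (m : ℕ) :
      2 * sin θ * cos ((2 * m + 1) * θ) = sin (2 * (m + 1 : ℕ) * θ) - sin (2 * m * θ) := by
    rw [show 2 * ((m + 1 : ℕ) : ℝ) * θ = (2 * m + 1) * θ + θ by push_cast; ring,
      show 2 * (m : ℝ) * θ = (2 * m + 1) * θ - θ by ring, sin_add, sin_sub]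
    ring
  simp only [mul_sum, telescope, sum_range_sub (fun m : ℕ => sin (2 * m * θ)), Nat.cast_zero,
    mul_zero, zero_mul, sin_zero, sub_zero]

theorem sum_range_two_mul_ite_odd {M : Type*} [AddCommMonoid M] (f : ℕ → M) (n : ℕ) :
    ∑ j ∈ range (2 * n), (if Odd j then f j else 0) = ∑ m ∈ range n, f (2 * m + 1) := by
  induction n with
  | zero => simp
  | succ n ih =>
    rw [show 2 * (n + 1) = 2 * n + 1 + 1 by ring, sum_range_succ, sum_range_succ, ih,
      sum_range_succ, if_neg (Nat.not_odd_iff_even.mpr (even_two_mul n)),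
      if_pos (odd_two_mul_add_one n), add_zero]

theorem two_mul_sum_chebLobattoWeight_mul {n : ℕ} (hn : 0 < n) (g : ℕ → ℝ)
    (hg : ∀ j ≤ n, g (2 * n - j) = g j) :
    2 * ∑ j ∈ range (n + 1), chebLobattoWeight n j * g j = ∑ j ∈ range (2 * n), g j := by
  have upper_half : ∑ i ∈ range n, g (n + i) = ∑ i ∈ range n, g (i + 1) := by
    rw [← sum_range_reflect (fun i => g (i + 1))]
    refine sum_congr rfl fun i hi => ?_
    rw [mem_range] at hi
    rw [show n - 1 - i + 1 = n - i by omega, ← hg (n - i) (by omega)]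
    congr 1
    omega
  obtain ⟨m, rfl⟩ : ∃ m, n = m + 1 := ⟨n - 1, by omega⟩
  have interior : ∀ i ∈ range m, chebLobattoWeight (m + 1) (i + 1) * g (i + 1) = g (i + 1) :=
    fun i hi => by
      rw [mem_range] at hi
      rw [chebLobattoWeight, if_neg (by omega), one_mul]
  rw [two_mul (m + 1), sum_range_add g, upper_half, sum_range_succ' g,
    sum_range_succ (fun i => g (i + 1)), sum_range_succ _ (m + 1), sum_range_succ' _ m,
    sum_congr rfl interior]
  simp only [chebLobattoWeight, true_or, or_true, if_true]
  ring

variable {n : ℕ}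

theorem Iodd_chebyshevT_eq (hn : 0 < n) (k : ℕ) :
    Iodd n (fun x => (T ℝ (k : ℤ)).eval x) =
      1 / (2 * n) * ∑ m ∈ range n, cos ((2 * m + 1) * (k * π / n)) := by
  set θ : ℝ := k * π / n
  set g : ℕ → ℝ := fun j => if Odd j then cos (j * θ) else 0
  have hn' : (n : ℝ) ≠ 0 := by positivity
  have hg : ∀ j ≤ n, g (2 * n - j) = g j := fun j hj => by
    have parity : Odd (2 * n - j) ↔ Odd j := by
      rw [Nat.odd_sub (by omega), iff_false_left (Nat.not_odd_iff_even.mpr (even_two_mul n)),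
        Nat.not_even_iff_odd]
    have period : ((2 * n - j : ℕ) : ℝ) * θ = k * (2 * π) - j * θ := by
      rw [Nat.cast_sub (by omega)]
      simp only [θ]
      field_simp
      push_cast
      ring
    simp only [g, parity, period, cos_nat_mul_two_pi_sub]
  have summand (j : ℕ) : (T ℝ (k : ℤ)).eval (cos (j * π / n)) = cos (j * θ) := by
    rw [T_real_cos]
    congr 1
    push_cast
    ring
  calc Iodd n (fun x => (T ℝ (k : ℤ)).eval x)
      = 1 / n * ∑ j ∈ range (n + 1), chebLobattoWeight n j * g j := by
        simp only [Iodd, sum_filter, summand, g, mul_ite, mul_zero]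
    _ = 1 / (2 * n) * ∑ j ∈ range (2 * n), g j := by
        rw [← two_mul_sum_chebLobattoWeight_mul hn g hg]
        field_simp
    _ = 1 / (2 * n) * ∑ m ∈ range n, cos ((2 * m + 1) * θ) := by
        rw [sum_range_two_mul_ite_odd]
        push_cast
        rfl

theorem Iodd_chebyshevT_of_not_dvd (hn : 0 < n) {k : ℕ} (hk : ¬ n ∣ k) :
    Iodd n (fun x => (T ℝ (k : ℤ)).eval x) = 0 := by
  have hn' : (n : ℝ) ≠ 0 := by positivity
  have sin_ne_zero : sin (k * π / n) ≠ 0 := by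
    rintro h
    obtain ⟨m, hm⟩ := sin_eq_zero_iff.mp h
    have : (k : ℤ) = m * n := by
      field_simp at hm
      exact_mod_cast hm.symm
    exact hk (Int.natCast_dvd_natCast.mp ⟨m, by rw [this, mul_comm]⟩)
  have sin_full_period : sin (2 * n * (k * π / n)) = 0 := by
    rw [show 2 * n * (k * π / n) = ((2 * k : ℕ) : ℝ) * π by field_simp; push_cast; ring]
    exact sin_nat_mul_pi _
  have sum_eq_zero : ∑ m ∈ range n, cos ((2 * m + 1) * (k * π / n)) = 0 := by
    have := two_mul_sin_mul_sum_range_cos_odd_mul (k * π / n) n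
    rw [sin_full_period] at this
    simpa [sin_ne_zero] using this
  rw [Iodd_chebyshevT_eq hn, sum_eq_zero, mul_zero]

theorem Iodd_chebyshevT_nat_mul (hn : 0 < n) (d : ℕ) :
    Iodd n (fun x => (T ℝ ((n * d : ℕ) : ℤ)).eval x) = (-1) ^ d / 2 := by
  have hn' : (n : ℝ) ≠ 0 := by positivity
  have summand (m : ℕ) : cos ((2 * m + 1) * ((n * d : ℕ) * π / n)) = (-1) ^ d := by
    rw [show (2 * m + 1) * (((n * d : ℕ) : ℝ) * π / n) = (((2 * m + 1) * d : ℕ) : ℝ) * π by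
        field_simp; push_cast; ring,
      cos_nat_mul_pi, pow_mul, Odd.neg_one_pow (odd_two_mul_add_one m)]
  rw [Iodd_chebyshevT_eq hn]
  simp only [summand, sum_const, card_range, nsmul_eq_mul]
  field_simp

theorem IO_chebyshevT (n : ℕ) (hn : 1 ≤ n) (k : ℕ) :
    (¬ n ∣ k → Iodd n (fun x => (Polynomial.Chebyshev.T ℝ (k : ℤ)).eval x) = 0) ∧
    (k % (2 * n) = 0 → Iodd n (fun x => (Polynomial.Chebyshev.T ℝ (k : ℤ)).eval x) = 1 / 2) ∧
    (k % (2 * n) = n → Iodd n (fun x => (Polynomial.Chebyshev.T ℝ (k : ℤ)).eval x) = -(1 / 2)) := by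
  have div_add_mod := Nat.div_add_mod k (2 * n)
  refine ⟨Iodd_chebyshevT_of_not_dvd hn, fun h => ?_, fun h => ?_⟩
  · obtain ⟨t, rfl⟩ : ∃ t, k = n * (2 * t) := ⟨k / (2 * n), by rw [h] at div_add_mod; linarith⟩
    rw [Iodd_chebyshevT_nat_mul hn, pow_mul]
    norm_num
  · obtain ⟨t, rfl⟩ : ∃ t, k = n * (2 * t + 1) :=
      ⟨k / (2 * n), by rw [h] at div_add_mod; linarith⟩
    rw [Iodd_chebyshevT_nat_mul hn, Odd.neg_one_pow (odd_two_mul_add_one t), neg_div]
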